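/- If G is a graph containing a vertex v of degree 3 all of whose neighbors have degree at least 2, then G is not representable in Av(4123): no monotone gridding matrix M with cell graph isomorphic to G satisfies Grid(M) ⊆ Av(4123). -/
import Mathlib


/-- A monotone gridding matrix with `k` columns and `ℓ` rows (rows numbered bottom to
top): entry `none` is empty, `some true` is the class Inc, `some false` is Dec.
`M i j` is the entry in column `i`, row `j`. -/
abbrev GMatrix (k ℓ : ℕ) := Fin k → Fin ℓ → Option Bool

/-- The cell graph of a gridding matrix: the nonempty entries are the (effective)
vertices; two nonempty entries are adjacent if they share a row or a column and no
nonempty entry lies strictly between them. -/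
def cellGraph {k ℓ : ℕ} (M : GMatrix k ℓ) : SimpleGraph (Fin k × Fin ℓ) :=
  SimpleGraph.fromRel (fun x y =>
    M x.1 x.2 ≠ none ∧ M y.1 y.2 ≠ none ∧
    ((x.1 = y.1 ∧ x.2 < y.2 ∧ ∀ j, x.2 < j → j < y.2 → M x.1 j = none) ∨
     (x.2 = y.2 ∧ x.1 < y.1 ∧ ∀ i, x.1 < i → i < y.1 → M i x.2 = none)))
/-- The point at position `p` of the permutation `π` lies in the `(i,j)`-cell of the
gridding given by column boundaries `c` and row boundaries `r`. -/
def InCell {n k ℓ : ℕ} (c : Fin (k + 1) → ℕ) (r : Fin (ℓ + 1) → ℕ)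
    (π : Equiv.Perm (Fin n)) (p : Fin n) (i : Fin k) (j : Fin ℓ) : Prop :=
  c i.castSucc ≤ p.val ∧ p.val < c i.succ ∧
  r j.castSucc ≤ (π p).val ∧ (π p).val < r j.succ

/-- `(c, r)` is an `M`-gridding of the permutation `π`: every nonempty cell of the
gridding corresponds to a nonempty matrix entry, and the points in a cell with an
Inc (resp. Dec) entry form an increasing (resp. decreasing) pattern. -/
def IsGridding {n k ℓ : ℕ} (M : GMatrix k ℓ) (π : Equiv.Perm (Fin n))
    (c : Fin (k + 1) → ℕ) (r : Fin (ℓ + 1) → ℕ) : Prop :=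
  Monotone c ∧ Monotone r ∧ c 0 = 0 ∧ c (Fin.last k) = n ∧
  r 0 = 0 ∧ r (Fin.last ℓ) = n ∧
  ∀ (i : Fin k) (j : Fin ℓ),
    (∀ p, InCell c r π p i j → M i j ≠ none) ∧
    (M i j = some true → ∀ p q, InCell c r π p i j → InCell c r π q i j →
      p < q → π p < π q) ∧
    (M i j = some false → ∀ p q, InCell c r π p i j → InCell c r π q i j →
      p < q → π q < π p)

/-- The monotone grid class of `M`, at length `n`: permutations admitting an
`M`-gridding. -/
def GridClass {k ℓ : ℕ} (M : GMatrix k ℓ) (n : ℕ) : Set (Equiv.Perm (Fin n)) :=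
  {π | ∃ c r, IsGridding M π c r}
/-- `π` contains the pattern `σ`: some subsequence of `π` is order-isomorphic to `σ`. -/
def Contains {n m : ℕ} (π : Equiv.Perm (Fin n)) (σ : Equiv.Perm (Fin m)) : Prop :=
  ∃ f : Fin m → Fin n, StrictMono f ∧ ∀ a b : Fin m, σ a < σ b ↔ π (f a) < π (f b)

/-- The pattern 4123 (as a permutation of `Fin 4`, 0-indexed values `3,0,1,2`). -/
def perm4123 : Equiv.Perm (Fin 4) := Equiv.addRight (3 : Fin 4)

namespace Av4123Aux

lemma contains_self : Contains perm4123 perm4123 :=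
  ⟨id, strictMono_id, fun _ _ => Iff.rfl⟩

lemma card_lt_val (p : Fin 4) :
    (Finset.univ.filter (fun q : Fin 4 => q < p)).card = p.val := by
  fin_cases p <;> decide

lemma card_le_val (p : Fin 4) :
    (Finset.univ.filter (fun q : Fin 4 => q ≤ p)).card = p.val + 1 := by
  fin_cases p <;> decide

lemma card_pi_lt (p : Fin 4) :
    (Finset.univ.filter (fun q : Fin 4 => perm4123 q < perm4123 p)).card
      = (perm4123 p).val := by
  fin_cases p <;> decide

lemma card_pi_le (p : Fin 4) :
    (Finset.univ.filter (fun q : Fin 4 => perm4123 q ≤ perm4123 p)).card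
      = (perm4123 p).val + 1 := by
  fin_cases p <;> decide

lemma realize {k ℓ : ℕ} {M : GMatrix k ℓ} (C : Fin 4 → Fin k × Fin ℓ)
    (h1 : ∀ p, M (C p).1 (C p).2 ≠ none)
    (hne : ∀ p q : Fin 4, p ≠ q → C p ≠ C q)
    (hcol : ∀ p q : Fin 4, p ≤ q → (C p).1 ≤ (C q).1)
    (hrow : ∀ p q : Fin 4, perm4123 p ≤ perm4123 q → (C p).2 ≤ (C q).2) :
    perm4123 ∈ GridClass M 4 := by
  classical
  set π : Equiv.Perm (Fin 4) := perm4123 with hπ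
  set c : Fin (k+1) → ℕ :=
    fun i => (Finset.univ.filter (fun p : Fin 4 => ((C p).1 : ℕ) < (i : ℕ))).card with hc
  set r : Fin (ℓ+1) → ℕ :=
    fun j => (Finset.univ.filter (fun p : Fin 4 => ((C p).2 : ℕ) < (j : ℕ))).card with hr
  have mc : Monotone c := by
    intro i i' h
    apply Finset.card_le_card
    intro p hp
    simp only [Finset.mem_filter, Finset.mem_univ, true_and] at hp ⊢
    exact lt_of_lt_of_le hp (Fin.le_def.mp h)
  have mr : Monotone r := by
    intro j j' h
    apply Finset.card_le_card
    intro p hp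
    simp only [Finset.mem_filter, Finset.mem_univ, true_and] at hp ⊢
    exact lt_of_lt_of_le hp (Fin.le_def.mp h)
  have colmem : ∀ p : Fin 4,
      c ((C p).1.castSucc) ≤ p.val ∧ p.val < c ((C p).1.succ) := by
    intro p
    constructor
    · rw [← card_lt_val p]
      apply Finset.card_le_card
      intro q hq
      simp only [Finset.mem_filter, Finset.mem_univ, true_and, Fin.coe_castSucc] at hq ⊢
      rcases lt_trichotomy q p with h | h | h
      · exact h
      · exact absurd hq (by rw [h]; exact lt_irrefl _)
      · exact absurd hq (not_lt.mpr (hcol p q h.le))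
    · have : p.val + 1 ≤ c ((C p).1.succ) := by
        rw [← card_le_val p]
        apply Finset.card_le_card
        intro q hq
        simp only [Finset.mem_filter, Finset.mem_univ, true_and, Fin.val_succ] at hq ⊢
        exact Nat.lt_succ_of_le (hcol q p hq)
      omega
  have rowmem : ∀ p : Fin 4,
      r ((C p).2.castSucc) ≤ (π p).val ∧ (π p).val < r ((C p).2.succ) := by
    intro p
    constructor
    · rw [show ((π p).val) = _ from (card_pi_lt p).symm]
      apply Finset.card_le_card
      intro q hq
      simp only [Finset.mem_filter, Finset.mem_univ, true_and, Fin.coe_castSucc] at hq ⊢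
      rcases lt_trichotomy (π q) (π p) with h | h | h
      · exact h
      · exact absurd hq (by rw [π.injective h]; exact lt_irrefl _)
      · exact absurd hq (not_lt.mpr (hrow p q h.le))
    · have : (π p).val + 1 ≤ r ((C p).2.succ) := by
        rw [← card_pi_le p]
        apply Finset.card_le_card
        intro q hq
        simp only [Finset.mem_filter, Finset.mem_univ, true_and, Fin.val_succ] at hq ⊢
        exact Nat.lt_succ_of_le (hrow q p hq)
      omega
  have uc : ∀ (p : Fin 4) (i : Fin k),
      c i.castSucc ≤ p.val → p.val < c i.succ → i = (C p).1 := by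
    intro p i hl hr'
    rcases lt_trichotomy i (C p).1 with h | h | h
    · exfalso
      have h1' : c i.succ ≤ c ((C p).1.castSucc) := by
        apply mc
        rw [Fin.le_def, Fin.val_succ, Fin.coe_castSucc]
        exact Fin.lt_def.mp h
      have h2' := (colmem p).1
      omega
    · exact h
    · exfalso
      have h1' : c ((C p).1.succ) ≤ c i.castSucc := by
        apply mc
        rw [Fin.le_def, Fin.val_succ, Fin.coe_castSucc]
        exact Fin.lt_def.mp h
      have h2' := (colmem p).2
      omega
  have ur : ∀ (p : Fin 4) (j : Fin ℓ),
      r j.castSucc ≤ (π p).val → (π p).val < r j.succ → j = (C p).2 := by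
    intro p j hl hr'
    rcases lt_trichotomy j (C p).2 with h | h | h
    · exfalso
      have h1' : r j.succ ≤ r ((C p).2.castSucc) := by
        apply mr
        rw [Fin.le_def, Fin.val_succ, Fin.coe_castSucc]
        exact Fin.lt_def.mp h
      have h2' := (rowmem p).1
      omega
    · exact h
    · exfalso
      have h1' : r ((C p).2.succ) ≤ r j.castSucc := by
        apply mr
        rw [Fin.le_def, Fin.val_succ, Fin.coe_castSucc]
        exact Fin.lt_def.mp h
      have h2' := (rowmem p).2
      omega
  have cellEq : ∀ (p : Fin 4) (i : Fin k) (j : Fin ℓ),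
      InCell c r π p i j → (i, j) = C p := by
    intro p i j hp
    obtain ⟨h1', h2', h3', h4'⟩ := hp
    have := uc p i h1' h2'
    have := ur p j h3' h4'
    subst this; subst this
    rfl
  refine ⟨c, r, mc, mr, ?_, ?_, ?_, ?_, ?_⟩
  · simp [hc]
  · simp [hc, Fin.is_lt]
  · simp [hr]
  · simp [hr, Fin.is_lt]
  · intro i j
    refine ⟨?_, ?_, ?_⟩
    · intro p hp
      have h := cellEq p i j hp
      have := h1 p
      rw [← h] at this
      exact this
    · intro _ p q hp hq hpq
      have h := (cellEq p i j hp).symm.trans (cellEq q i j hq)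
      exact absurd h (hne p q (ne_of_lt hpq))
    · intro _ p q hp hq hpq
      have h := (cellEq p i j hp).symm.trans (cellEq q i j hq)
      exact absurd h (hne p q (ne_of_lt hpq))

end Av4123Aux

namespace Av4123Aux2
open Av4123Aux

lemma ne_of_fst {α β : Type*} {A B : α × β} (h : A.1 ≠ B.1) : A ≠ B :=
  fun e => h (congrArg Prod.fst e)

lemma ne_of_snd {α β : Type*} {A B : α × β} (h : A.2 ≠ B.2) : A ≠ B :=
  fun e => h (congrArg Prod.snd e)

lemma build {k ℓ : ℕ} {M : GMatrix k ℓ} (C0 C1 C2 C3 : Fin k × Fin ℓ)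
    (m0 : M C0.1 C0.2 ≠ none) (m1 : M C1.1 C1.2 ≠ none)
    (m2 : M C2.1 C2.2 ≠ none) (m3 : M C3.1 C3.2 ≠ none)
    (n01 : C0 ≠ C1) (n02 : C0 ≠ C2) (n03 : C0 ≠ C3)
    (n12 : C1 ≠ C2) (n13 : C1 ≠ C3) (n23 : C2 ≠ C3)
    (c01 : C0.1 ≤ C1.1) (c12 : C1.1 ≤ C2.1) (c23 : C2.1 ≤ C3.1)
    (r12 : C1.2 ≤ C2.2) (r23 : C2.2 ≤ C3.2) (r30 : C3.2 ≤ C0.2)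
    (hav : ∀ (n : ℕ), ∀ π ∈ GridClass M n, ¬ Contains π perm4123) : False := by
  refine hav 4 perm4123 (realize ![C0, C1, C2, C3] ?_ ?_ ?_ ?_) contains_self
  · intro p
    fin_cases p <;> simpa using ‹_›
  · intro p q hpq
    fin_cases p <;> fin_cases q <;>
      simp only [Matrix.cons_val_zero, Matrix.cons_val_one, Matrix.head_cons,
        Matrix.cons_val_two, Matrix.tail_cons, Matrix.cons_val_three] <;>
      first
        | exact absurd rfl hpq
        | assumption
        | exact n01.symm
        | exact n02.symm
        | exact n03.symm
        | exact n12.symm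
        | exact n13.symm
        | exact n23.symm
  · intro p q hpq
    fin_cases p <;> fin_cases q <;>
      simp only [Matrix.cons_val_zero, Matrix.cons_val_one, Matrix.head_cons,
        Matrix.cons_val_two, Matrix.tail_cons, Matrix.cons_val_three] <;>
      first
        | exact absurd hpq (by decide)
        | exact le_refl _
        | exact c01
        | exact c12
        | exact c23
        | exact c01.trans c12
        | exact c12.trans c23
        | exact (c01.trans c12).trans c23
  · intro p q hpq
    fin_cases p <;> fin_cases q <;>
      simp only [Matrix.cons_val_zero, Matrix.cons_val_one, Matrix.head_cons,
        Matrix.cons_val_two, Matrix.tail_cons, Matrix.cons_val_three] <;>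
      first
        | exact absurd hpq (by decide)
        | exact le_refl _
        | exact r12
        | exact r23
        | exact r30
        | exact r12.trans r23
        | exact r23.trans r30
        | exact (r12.trans r23).trans r30

end Av4123Aux2

namespace Av4123Aux3
open Av4123Aux Av4123Aux2

lemma adj_cases {k ℓ : ℕ} {M : GMatrix k ℓ} {X N : Fin k × Fin ℓ}
    (h : (cellGraph M).Adj X N) :
    M X.1 X.2 ≠ none ∧ M N.1 N.2 ≠ none ∧
      ((X.1 = N.1 ∧ X.2 < N.2 ∧ ∀ j, X.2 < j → j < N.2 → M X.1 j = none) ∨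
       (X.1 = N.1 ∧ N.2 < X.2 ∧ ∀ j, N.2 < j → j < X.2 → M X.1 j = none) ∨
       (X.2 = N.2 ∧ X.1 < N.1 ∧ ∀ i, X.1 < i → i < N.1 → M i X.2 = none) ∨
       (X.2 = N.2 ∧ N.1 < X.1 ∧ ∀ i, N.1 < i → i < X.1 → M i X.2 = none)) := by
  rw [cellGraph, SimpleGraph.fromRel_adj] at h
  obtain ⟨hne, h | h⟩ := h
  · obtain ⟨ha, hb, h | h⟩ := h
    · exact ⟨ha, hb, Or.inl h⟩
    · exact ⟨ha, hb, Or.inr (Or.inr (Or.inl h))⟩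
  · obtain ⟨hb, ha, h | h⟩ := h
    · refine ⟨ha, hb, Or.inr (Or.inl ⟨h.1.symm, h.2.1, ?_⟩)⟩
      intro j hj1 hj2
      have := h.2.2 j hj1 hj2
      rwa [h.1] at this
    · refine ⟨ha, hb, Or.inr (Or.inr (Or.inr ⟨h.1.symm, h.2.1, ?_⟩))⟩
      intro i hi1 hi2
      have := h.2.2 i hi1 hi2
      rwa [h.1] at this

lemma line_up {m : ℕ} (E : Fin m → Option Bool) {y y₁ y₂ : Fin m} (hy : y₁ ≠ y₂)
    (h1 : E y₁ ≠ none) (h2 : E y₂ ≠ none) (hl1 : y < y₁) (hl2 : y < y₂)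
    (hb1 : ∀ j, y < j → j < y₁ → E j = none)
    (hb2 : ∀ j, y < j → j < y₂ → E j = none) : False := by
  rcases lt_trichotomy y₁ y₂ with h | h | h
  · exact h1 (hb2 _ hl1 h)
  · exact hy h
  · exact h2 (hb1 _ hl2 h)

lemma line_down {m : ℕ} (E : Fin m → Option Bool) {y y₁ y₂ : Fin m} (hy : y₁ ≠ y₂)
    (h1 : E y₁ ≠ none) (h2 : E y₂ ≠ none) (hl1 : y₁ < y) (hl2 : y₂ < y)
    (hb1 : ∀ j, y₁ < j → j < y → E j = none)
    (hb2 : ∀ j, y₂ < j → j < y → E j = none) : False := by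
  rcases lt_trichotomy y₁ y₂ with h | h | h
  · exact h2 (hb1 _ h hl2)
  · exact hy h
  · exact h1 (hb2 _ h hl1)

lemma vert_pair {k ℓ : ℕ} {M : GMatrix k ℓ} {X N₁ N₂ : Fin k × Fin ℓ}
    (a1 : (cellGraph M).Adj X N₁) (a2 : (cellGraph M).Adj X N₂) (hne : N₁ ≠ N₂)
    (e1 : X.1 = N₁.1) (e2 : X.1 = N₂.1) :
    (X.2 < N₁.2 ∧ (∀ j, X.2 < j → j < N₁.2 → M X.1 j = none) ∧ N₂.2 < X.2) ∨
    (X.2 < N₂.2 ∧ (∀ j, X.2 < j → j < N₂.2 → M X.1 j = none) ∧ N₁.2 < X.2) := by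
  obtain ⟨hX, h1ne, hc1⟩ := adj_cases a1
  obtain ⟨-, h2ne, hc2⟩ := adj_cases a2
  have h1ne' : M X.1 N₁.2 ≠ none := by rwa [e1]
  have h2ne' : M X.1 N₂.2 ≠ none := by rwa [e2]
  have hsnd : N₁.2 ≠ N₂.2 := fun h => hne (Prod.ext (e1.symm.trans e2) h)
  rcases hc1 with h1 | h1 | h1 | h1
  · rcases hc2 with h2 | h2 | h2 | h2
    · exact (line_up (fun j => M X.1 j) hsnd h1ne' h2ne'
        h1.2.1 h2.2.1 h1.2.2 h2.2.2).elim
    · exact Or.inl ⟨h1.2.1, h1.2.2, h2.2.1⟩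
    · exact absurd a2.ne (by simp [Prod.ext_iff, e2, h2.1])
    · exact absurd a2.ne (by simp [Prod.ext_iff, e2, h2.1])
  · rcases hc2 with h2 | h2 | h2 | h2
    · exact Or.inr ⟨h2.2.1, h2.2.2, h1.2.1⟩
    · exact (line_down (fun j => M X.1 j) hsnd h1ne' h2ne'
        h1.2.1 h2.2.1 h1.2.2 h2.2.2).elim
    · exact absurd a2.ne (by simp [Prod.ext_iff, e2, h2.1])
    · exact absurd a2.ne (by simp [Prod.ext_iff, e2, h2.1])
  · exact absurd a1.ne (by simp [Prod.ext_iff, e1, h1.1])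
  · exact absurd a1.ne (by simp [Prod.ext_iff, e1, h1.1])

lemma horiz_pair {k ℓ : ℕ} {M : GMatrix k ℓ} {X N₁ N₂ : Fin k × Fin ℓ}
    (a1 : (cellGraph M).Adj X N₁) (a2 : (cellGraph M).Adj X N₂) (hne : N₁ ≠ N₂)
    (e1 : X.2 = N₁.2) (e2 : X.2 = N₂.2) :
    (N₁.1 < X.1 ∧ (∀ i, N₁.1 < i → i < X.1 → M i X.2 = none) ∧ X.1 < N₂.1) ∨
    (N₂.1 < X.1 ∧ (∀ i, N₂.1 < i → i < X.1 → M i X.2 = none) ∧ X.1 < N₁.1) := by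
  obtain ⟨hX, h1ne, hc1⟩ := adj_cases a1
  obtain ⟨-, h2ne, hc2⟩ := adj_cases a2
  have h1ne' : M N₁.1 X.2 ≠ none := by rwa [e1]
  have h2ne' : M N₂.1 X.2 ≠ none := by rwa [e2]
  have hfst : N₁.1 ≠ N₂.1 := fun h => hne (Prod.ext h (e1.symm.trans e2))
  rcases hc1 with h1 | h1 | h1 | h1
  · exact absurd a1.ne (by simp [Prod.ext_iff, e1, h1.1])
  · exact absurd a1.ne (by simp [Prod.ext_iff, e1, h1.1])
  · rcases hc2 with h2 | h2 | h2 | h2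
    · exact absurd a2.ne (by simp [Prod.ext_iff, e2, h2.1])
    · exact absurd a2.ne (by simp [Prod.ext_iff, e2, h2.1])
    · exact (line_up (fun i => M i X.2) hfst h1ne' h2ne'
        h1.2.1 h2.2.1 h1.2.2 h2.2.2).elim
    · exact Or.inr ⟨h2.2.1, h2.2.2, h1.2.1⟩
  · rcases hc2 with h2 | h2 | h2 | h2
    · exact absurd a2.ne (by simp [Prod.ext_iff, e2, h2.1])
    · exact absurd a2.ne (by simp [Prod.ext_iff, e2, h2.1])
    · exact Or.inl ⟨h1.2.1, h1.2.2, h2.2.1⟩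
    · exact (line_down (fun i => M i X.2) hfst h1ne' h2ne'
        h1.2.1 h2.2.1 h1.2.2 h2.2.2).elim

end Av4123Aux3

namespace Av4123Aux4
open Av4123Aux Av4123Aux2 Av4123Aux3

lemma finish_v {k ℓ : ℕ} {M : GMatrix k ℓ} {X U D W : Fin k × Fin ℓ}
    (hXne : M X.1 X.2 ≠ none) (hUne : M U.1 U.2 ≠ none) (hDne : M D.1 D.2 ≠ none)
    (hU1 : X.1 = U.1) (hU2 : X.2 < U.2)
    (hUb : ∀ j, X.2 < j → j < U.2 → M X.1 j = none)
    (hD1 : X.1 = D.1) (hD2 : D.2 < X.2)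
    (hWadj : (cellGraph M).Adj U W) (hWX : W ≠ X)
    (hav : ∀ (n : ℕ), ∀ π ∈ GridClass M n, ¬ Contains π perm4123) : False := by
  obtain ⟨-, hWne, hc⟩ := adj_cases hWadj
  have eDU : D.1 = U.1 := hD1.symm.trans hU1
  have hDU : D.2 < U.2 := hD2.trans hU2
  rcases hc with h | h | h | h
  · -- W above U : C = (W, D, X, U)
    obtain ⟨e, hlt, -⟩ := h
    exact build W D X U hWne hDne hXne hUne
      (ne_of_snd (hDU.trans hlt).ne') (ne_of_snd (hU2.trans hlt).ne')
      (ne_of_snd hlt.ne') (ne_of_snd hD2.ne) (ne_of_snd hDU.ne) (ne_of_snd hU2.ne)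
      (le_of_eq (e.symm.trans eDU.symm)) (le_of_eq hD1.symm) (le_of_eq hU1)
      hD2.le hU2.le hlt.le hav
  · -- W below U: impossible
    obtain ⟨e, hlt, hb⟩ := h
    have hWX1 : W.1 = X.1 := e.symm.trans hU1.symm
    rcases lt_trichotomy W.2 X.2 with h' | h' | h'
    · exact hXne (by have := hb X.2 h' hU2; rwa [← hU1] at this)
    · exact hWX (Prod.ext hWX1 h')
    · exact hWne (by rw [hWX1]; exact hUb W.2 h' hlt)
  · -- W right of U : C = (U, D, X, W)
    obtain ⟨e, hlt, -⟩ := h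
    have hXW1 : X.1 < W.1 := hU1.trans_lt hlt
    exact build U D X W hUne hDne hXne hWne
      (ne_of_snd hDU.ne') (ne_of_snd hU2.ne') (ne_of_fst hlt.ne)
      (ne_of_snd hD2.ne) (ne_of_fst (eDU.trans_lt hlt).ne) (ne_of_fst hXW1.ne)
      (le_of_eq (hU1.symm.trans hD1)) (le_of_eq hD1.symm) hXW1.le
      hD2.le (hU2.le.trans (le_of_eq e)) (le_of_eq e.symm) hav
  · -- W left of U : C = (W, D, X, U)
    obtain ⟨e, hlt, -⟩ := h
    have hWD1 : W.1 < D.1 := hlt.trans_eq eDU.symm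
    have hWX1 : W.1 < X.1 := hlt.trans_eq hU1.symm
    exact build W D X U hWne hDne hXne hUne
      (ne_of_fst hWD1.ne) (ne_of_fst hWX1.ne) (ne_of_fst hlt.ne)
      (ne_of_snd hD2.ne) (ne_of_snd hDU.ne) (ne_of_snd hU2.ne)
      hWD1.le (le_of_eq hD1.symm) (le_of_eq hU1)
      hD2.le hU2.le (le_of_eq e) hav

lemma finish_h {k ℓ : ℕ} {M : GMatrix k ℓ} {X L R W : Fin k × Fin ℓ}
    (hXne : M X.1 X.2 ≠ none) (hLne : M L.1 L.2 ≠ none) (hRne : M R.1 R.2 ≠ none)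
    (hL2 : X.2 = L.2) (hL1 : L.1 < X.1)
    (hLb : ∀ i, L.1 < i → i < X.1 → M i X.2 = none)
    (hR2 : X.2 = R.2) (hR1 : X.1 < R.1)
    (hWadj : (cellGraph M).Adj L W) (hWX : W ≠ X)
    (hav : ∀ (n : ℕ), ∀ π ∈ GridClass M n, ¬ Contains π perm4123) : False := by
  obtain ⟨-, hWne, hc⟩ := adj_cases hWadj
  have hLR1 : L.1 < R.1 := hL1.trans hR1
  have eLR : L.2 = R.2 := hL2.symm.trans hR2
  rcases hc with h | h | h | h
  · -- W above L : C = (W, L, X, R)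
    obtain ⟨e, hlt, -⟩ := h
    have hWX1 : W.1 < X.1 := e.symm.trans_lt hL1
    have hWR1 : W.1 < R.1 := e.symm.trans_lt hLR1
    exact build W L X R hWne hLne hXne hRne
      (ne_of_snd hlt.ne') (ne_of_fst hWX1.ne) (ne_of_fst hWR1.ne)
      (ne_of_fst hL1.ne) (ne_of_fst hLR1.ne) (ne_of_fst hR1.ne)
      (le_of_eq e.symm) hL1.le hR1.le
      (le_of_eq hL2.symm) (le_of_eq hR2) ((eLR ▸ hlt).le) hav
  · -- W below L : C = (L, W, X, R)
    obtain ⟨e, hlt, -⟩ := h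
    have hWX1 : W.1 < X.1 := e.symm.trans_lt hL1
    have hWR1 : W.1 < R.1 := e.symm.trans_lt hLR1
    have hWX2 : W.2 < X.2 := hlt.trans_eq hL2.symm
    exact build L W X R hLne hWne hXne hRne
      (ne_of_snd hlt.ne') (ne_of_fst hL1.ne) (ne_of_fst hLR1.ne)
      (ne_of_fst hWX1.ne) (ne_of_fst hWR1.ne) (ne_of_fst hR1.ne)
      (le_of_eq e) hWX1.le hR1.le
      hWX2.le (le_of_eq hR2) (le_of_eq (hR2.symm.trans hL2)) hav
  · -- W right of L : impossible
    obtain ⟨e, hlt, hb⟩ := h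
    have hWL2 : W.2 = X.2 := e.symm.trans hL2.symm
    rcases lt_trichotomy W.1 X.1 with h' | h' | h'
    · exact hWne (by have := hLb W.1 hlt h'; rwa [← hWL2] at this)
    · exact hWX (Prod.ext h' hWL2)
    · exact hXne (by have := hb X.1 hL1 h'; rwa [← hL2] at this)
  · -- W left of L : C = (W, L, X, R)
    obtain ⟨e, hlt, -⟩ := h
    have hWX1 : W.1 < X.1 := hlt.trans hL1
    have hWR1 : W.1 < R.1 := hWX1.trans hR1
    exact build W L X R hWne hLne hXne hRne
      (ne_of_fst hlt.ne) (ne_of_fst hWX1.ne) (ne_of_fst hWR1.ne)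
      (ne_of_fst hL1.ne) (ne_of_fst hLR1.ne) (ne_of_fst hR1.ne)
      hlt.le hL1.le hR1.le
      (le_of_eq hL2.symm) (le_of_eq hR2) (le_of_eq (hR2.symm.trans (hL2.trans e))) hav

end Av4123Aux4

namespace Av4123Main
open Av4123Aux Av4123Aux2 Av4123Aux3 Av4123Aux4

lemma conclude_v {VG : Type} {G : SimpleGraph VG} {k ℓ : ℕ} {M : GMatrix k ℓ}
    {f : VG → Fin k × Fin ℓ} {v u₁ u₂ : VG}
    (hfinj : Function.Injective f)
    (hadj : ∀ a b : VG, G.Adj a b ↔ (cellGraph M).Adj (f a) (f b))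
    (hnb : ∀ u ∈ G.neighborSet v, 2 ≤ (G.neighborSet u).ncard)
    (h1 : G.Adj v u₁) (h2 : G.Adj v u₂) (hne : u₁ ≠ u₂)
    (e1 : (f v).1 = (f u₁).1) (e2 : (f v).1 = (f u₂).1)
    (hav : ∀ (n : ℕ), ∀ π ∈ GridClass M n, ¬ Contains π perm4123) : False := by
  have a1 := (hadj v u₁).mp h1
  have a2 := (hadj v u₂).mp h2
  have hXne := (adj_cases a1).1
  have h1ne := (adj_cases a1).2.1
  have h2ne := (adj_cases a2).2.1
  rcases vert_pair a1 a2 (fun h => hne (hfinj h)) e1 e2 with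
    ⟨hu, hb, hd⟩ | ⟨hu, hb, hd⟩
  · obtain ⟨w, hw, hwv⟩ := Set.exists_ne_of_one_lt_ncard
      (s := G.neighborSet u₁) (by have := hnb u₁ h1; omega) v
    exact finish_v hXne h1ne h2ne e1 hu hb e2 hd
      ((hadj u₁ w).mp hw) (fun h => hwv (hfinj h)) hav
  · obtain ⟨w, hw, hwv⟩ := Set.exists_ne_of_one_lt_ncard
      (s := G.neighborSet u₂) (by have := hnb u₂ h2; omega) v
    exact finish_v hXne h2ne h1ne e2 hu hb e1 hd
      ((hadj u₂ w).mp hw) (fun h => hwv (hfinj h)) hav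

lemma conclude_h {VG : Type} {G : SimpleGraph VG} {k ℓ : ℕ} {M : GMatrix k ℓ}
    {f : VG → Fin k × Fin ℓ} {v u₁ u₂ : VG}
    (hfinj : Function.Injective f)
    (hadj : ∀ a b : VG, G.Adj a b ↔ (cellGraph M).Adj (f a) (f b))
    (hnb : ∀ u ∈ G.neighborSet v, 2 ≤ (G.neighborSet u).ncard)
    (h1 : G.Adj v u₁) (h2 : G.Adj v u₂) (hne : u₁ ≠ u₂)
    (e1 : (f v).2 = (f u₁).2) (e2 : (f v).2 = (f u₂).2)
    (hav : ∀ (n : ℕ), ∀ π ∈ GridClass M n, ¬ Contains π perm4123) : False := by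
  have a1 := (hadj v u₁).mp h1
  have a2 := (hadj v u₂).mp h2
  have hXne := (adj_cases a1).1
  have h1ne := (adj_cases a1).2.1
  have h2ne := (adj_cases a2).2.1
  rcases horiz_pair a1 a2 (fun h => hne (hfinj h)) e1 e2 with
    ⟨hu, hb, hd⟩ | ⟨hu, hb, hd⟩
  · obtain ⟨w, hw, hwv⟩ := Set.exists_ne_of_one_lt_ncard
      (s := G.neighborSet u₁) (by have := hnb u₁ h1; omega) v
    exact finish_h hXne h1ne h2ne e1 hu hb e2 hd
      ((hadj u₁ w).mp hw) (fun h => hwv (hfinj h)) hav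
  · obtain ⟨w, hw, hwv⟩ := Set.exists_ne_of_one_lt_ncard
      (s := G.neighborSet u₂) (by have := hnb u₂ h2; omega) v
    exact finish_h hXne h2ne h1ne e2 hu hb e1 hd
      ((hadj u₂ w).mp hw) (fun h => hwv (hfinj h)) hav

end Av4123Main

/-- If `G` has a vertex of degree 3 all of whose neighbors have degree at least 2, then
`G` is not representable in `Av(4123)`: there is no monotone gridding matrix `M` whose
cell graph is isomorphic to `G` with `Grid(M) ⊆ Av(4123)`. -/
theorem av4123_not_representable {VG : Type} (G : SimpleGraph VG) (v : VG)
    (hv : (G.neighborSet v).ncard = 3)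
    (hnb : ∀ u ∈ G.neighborSet v, 2 ≤ (G.neighborSet u).ncard) :
    ¬ ∃ (k ℓ : ℕ) (M : GMatrix k ℓ) (f : VG → Fin k × Fin ℓ),
        Function.Injective f ∧
        (∀ x : Fin k × Fin ℓ, M x.1 x.2 ≠ none ↔ ∃ a, f a = x) ∧
        (∀ a b : VG, G.Adj a b ↔ (cellGraph M).Adj (f a) (f b)) ∧
        (∀ n : ℕ, ∀ π ∈ GridClass M n, ¬ Contains π perm4123) := by
  rintro ⟨k, ℓ, M, f, hfinj, -, hadj, havoid⟩
  obtain ⟨a, b, c, hab, hac, hbc, hset⟩ := Set.ncard_eq_three.mp hv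
  have hav' : G.Adj v a := by
    have : a ∈ G.neighborSet v := by rw [hset]; simp
    exact this
  have hbv : G.Adj v b := by
    have : b ∈ G.neighborSet v := by rw [hset]; simp
    exact this
  have hcv : G.Adj v c := by
    have : c ∈ G.neighborSet v := by rw [hset]; simp
    exact this
  have coarse : ∀ u : VG, G.Adj v u →
      (f v).1 = (f u).1 ∨ (f v).2 = (f u).2 := by
    intro u h
    rcases (Av4123Aux3.adj_cases ((hadj v u).mp h)).2.2 with h' | h' | h' | h'
    · exact Or.inl h'.1
    · exact Or.inl h'.1
    · exact Or.inr h'.1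
    · exact Or.inr h'.1
  rcases coarse a hav' with ha | ha <;> rcases coarse b hbv with hb | hb <;>
    rcases coarse c hcv with hc | hc
  · exact Av4123Main.conclude_v hfinj hadj hnb hav' hbv hab ha hb havoid
  · exact Av4123Main.conclude_v hfinj hadj hnb hav' hbv hab ha hb havoid
  · exact Av4123Main.conclude_v hfinj hadj hnb hav' hcv hac ha hc havoid
  · exact Av4123Main.conclude_h hfinj hadj hnb hbv hcv hbc hb hc havoid
  · exact Av4123Main.conclude_v hfinj hadj hnb hbv hcv hbc hb hc havoid
  · exact Av4123Main.conclude_h hfinj hadj hnb hav' hcv hac ha hc havoid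
  · exact Av4123Main.conclude_h hfinj hadj hnb hav' hbv hab ha hb havoid
  · exact Av4123Main.conclude_h hfinj hadj hnb hav' hbv hab ha hb havoid
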